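/- arXiv:1710.09047 — 2 statements merged into one kernel-verified Lean document; each statement's English description precedes it below -/
import Mathlib

section
/- Let 0 < α < 1/L. Then the composite block coordinate gradient descent map g_{αf} = g^p_{αf} ∘ g^{p−1}_{αf} ∘ ⋯ ∘ g^1_{αf} is a diffeomorphism of ℝⁿ, i.e. a continuously differentiable bijection whose inverse is continuously differentiable. -/
open Matrix MeasureTheory Filter Topology

noncomputable section

/-- A map is a (C¹) diffeomorphism if it is continuously differentiable, bijective,
and its inverse is continuously differentiable. -/
def IsDiffeomorphism {E : Type*} [NormedAddCommGroup E] [NormedSpace ℝ E] (g : E → E) : Prop :=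
  ContDiff ℝ 1 g ∧ Function.Bijective g ∧ ContDiff ℝ 1 (Function.invFun g)

/-- Jacobian matrix of a self-map of a Euclidean space. -/
def jacobianMatrix {ι : Type*} [Fintype ι] [DecidableEq ι]
    (g : EuclideanSpace ℝ ι → EuclideanSpace ℝ ι) (x : EuclideanSpace ℝ ι) :
    Matrix ι ι ℝ :=
  Matrix.of fun i j => fderiv ℝ g x (EuclideanSpace.single j 1) i

/-- The Hessian matrix of `f` at `x` (Jacobian of the gradient). -/
def hessianMatrix {ι : Type*} [Fintype ι] [DecidableEq ι]
    (f : EuclideanSpace ℝ ι → ℝ) (x : EuclideanSpace ℝ ι) : Matrix ι ι ℝ :=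
  jacobianMatrix (gradient f) x

/-- `z` is an eigenvalue (over `ℂ`) of the real matrix `M`. -/
def IsEigenvalue {ι : Type*} [Fintype ι] (M : Matrix ι ι ℝ) (z : ℂ) : Prop :=
  ∃ v : ι → ℂ, v ≠ 0 ∧ (M.map Complex.ofReal).mulVec v = z • v

/-- A real matrix has a negative (real) eigenvalue. -/
def HasNegEigenvalue {ι : Type*} [Fintype ι] (M : Matrix ι ι ℝ) : Prop :=
  ∃ (c : ℝ) (v : ι → ℝ), c < 0 ∧ v ≠ 0 ∧ M.mulVec v = c • v

/-- Strict saddle point: critical point whose Hessian has a negative eigenvalue. -/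
def IsStrictSaddle {ι : Type*} [Fintype ι] [DecidableEq ι]
    (f : EuclideanSpace ℝ ι → ℝ) (x : EuclideanSpace ℝ ι) : Prop :=
  gradient f x = 0 ∧ HasNegEigenvalue (hessianMatrix f x)

/-- The block-gradient-descent step `g^s_{αf}(x) = x - α U_s ∇_s f(x)`. -/
def blockGradStep {n p : ℕ} (f : EuclideanSpace ℝ (Fin n) → ℝ) (α : ℝ)
    (blk : Fin n → Fin p) (s : Fin p) (x : EuclideanSpace ℝ (Fin n)) :
    EuclideanSpace ℝ (Fin n) :=
  (WithLp.equiv 2 (Fin n → ℝ)).symm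
    fun i => x i - if blk i = s then α * gradient f x i else 0

/-- The BCGD map `g_{αf} = g^p ∘ ⋯ ∘ g^1` (block 1 is applied first). -/
def bcgdMap {n p : ℕ} (f : EuclideanSpace ℝ (Fin n) → ℝ) (α : ℝ)
    (blk : Fin n → Fin p) (x : EuclideanSpace ℝ (Fin n)) : EuclideanSpace ℝ (Fin n) :=
  (List.finRange p).foldl (fun y s => blockGradStep f α blk s y) x

/-- The projection matrix `U_s U_sᵀ` onto the coordinates of block `s`. -/
def blockProj {n p : ℕ} (blk : Fin n → Fin p) (s : Fin p) : Matrix (Fin n) (Fin n) ℝ :=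
  Matrix.diagonal fun i => if blk i = s then 1 else 0

/-- Strictly block lower triangular part of a matrix. -/
def lowerBlockPart {n p : ℕ} (blk : Fin n → Fin p) (A : Matrix (Fin n) (Fin n) ℝ) :
    Matrix (Fin n) (Fin n) ℝ :=
  Matrix.of fun i j => if blk j < blk i then A i j else 0

/-- Strictly block upper triangular part of a matrix. -/
def upperBlockPart {n p : ℕ} (blk : Fin n → Fin p) (A : Matrix (Fin n) (Fin n) ℝ) :
    Matrix (Fin n) (Fin n) ℝ :=
  Matrix.of fun i j => if blk i < blk j then A i j else 0

/-- Spectral radius of a real matrix: the largest modulus of its complex eigenvalues. -/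
def specRad {ι : Type*} [Fintype ι] (M : Matrix ι ι ℝ) : ℝ :=
  sSup {r : ℝ | ∃ z : ℂ, IsEigenvalue M z ∧ r = ‖z‖}

/-!
Each block step is `x ↦ x - α U_s U_sᵀ ∇f(x)`, a perturbation of the identity by a `C¹` map
with Lipschitz constant at most `α L < 1` (the coordinate projection `U_s U_sᵀ` has norm `≤ 1`).
Such a map is a homeomorphism by the contraction principle, and its derivative
`1 - D(α U_s U_sᵀ ∇f)` is invertible everywhere by the Neumann series, so its inverse is `C¹`.
The BCGD map is a composite of such steps.
-/

open scoped NNReal Matrix.Norms.L2Operator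

section Diffeomorphism

variable {E : Type*} [NormedAddCommGroup E] [NormedSpace ℝ E]

theorem Homeomorph.isDiffeomorphism (e : E ≃ₜ E) (he : ContDiff ℝ 1 e)
    (he_symm : ContDiff ℝ 1 e.symm) : IsDiffeomorphism e := by
  refine ⟨he, e.bijective, ?_⟩
  rwa [Function.invFun_eq_of_injective_of_rightInverse e.injective e.right_inv]

theorem IsDiffeomorphism.id : IsDiffeomorphism (id : E → E) :=
  (Homeomorph.refl E).isDiffeomorphism contDiff_id contDiff_id

theorem IsDiffeomorphism.comp {g h : E → E} (hg : IsDiffeomorphism g)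
    (hh : IsDiffeomorphism h) : IsDiffeomorphism (g ∘ h) := by
  obtain ⟨hg, hg_bij, hg_inv⟩ := hg
  obtain ⟨hh, hh_bij, hh_inv⟩ := hh
  have h_inv : Function.invFun (g ∘ h) = Function.invFun h ∘ Function.invFun g :=
    Function.invFun_eq_of_injective_of_rightInverse (hg_bij.comp hh_bij).injective
      ((Function.rightInverse_invFun hg_bij.surjective).comp
        (Function.rightInverse_invFun hh_bij.surjective))
  exact ⟨hg.comp hh, hg_bij.comp hh_bij, h_inv ▸ hh_inv.comp hg_inv⟩

theorem IsDiffeomorphism.foldl {ι : Type*} {T : ι → E → E} (hT : ∀ i, IsDiffeomorphism (T i))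
    (l : List ι) : IsDiffeomorphism fun x => l.foldl (fun y i => T i y) x := by
  induction l with
  | nil => exact IsDiffeomorphism.id
  | cons i l ih => exact ih.comp (hT i)

theorem approximatesLinearOn_id_sub {φ : E → E} {c : ℝ≥0} (hφ : LipschitzWith c φ) :
    ApproximatesLinearOn (fun x => x - φ x) (ContinuousLinearEquiv.refl ℝ E : E →L[ℝ] E)
      Set.univ c := by
  intro x _ y _
  have h : x - φ x - (y - φ y) - (x - y) = φ y - φ x := by abel
  simpa [h, norm_sub_rev y x] using hφ.norm_sub_le y x

theorem isDiffeomorphism_id_sub [CompleteSpace E] {φ : E → E} {c : ℝ≥0} (hc : c < 1)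
    (hφ : LipschitzWith c φ) (hφ_diff : ContDiff ℝ 1 φ) :
    IsDiffeomorphism fun x => x - φ x := by
  have hc_inv : Subsingleton E ∨
      c < ‖((ContinuousLinearEquiv.refl ℝ E).symm : E →L[ℝ] E)‖₊⁻¹ := by
    rcases subsingleton_or_nontrivial E with h | h
    · exact .inl h
    · exact .inr (by simpa using hc)
  let e := (approximatesLinearOn_id_sub hφ).toHomeomorph _ hc_inv
  have he : ContDiff ℝ 1 e := contDiff_id.sub hφ_diff
  have hDφ (a : E) : ‖fderiv ℝ φ a‖ < 1 := (norm_fderiv_le_of_lipschitz ℝ hφ).trans_lt hc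
  have he_deriv (a : E) : HasFDerivAt e
      (ContinuousLinearEquiv.ofUnit (Units.oneSub (fderiv ℝ φ a) (hDφ a)) : E →L[ℝ] E) a :=
    (hasFDerivAt_id a).sub ((hφ_diff.differentiable one_ne_zero) a).hasFDerivAt
  exact e.isDiffeomorphism he (e.contDiff_symm he_deriv he)

theorem isDiffeomorphism_id_sub_smul [CompleteSpace E] {P : E →L[ℝ] E} (hP : ‖P‖ ≤ 1)
    {G : E → E} {K : ℝ≥0} (hG : LipschitzWith K G) (hG_diff : ContDiff ℝ 1 G) {α : ℝ}
    (hαK : |α| * K < 1) : IsDiffeomorphism fun x => x - α • P (G x) := by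
  refine isDiffeomorphism_id_sub (c := ‖α‖₊ * (‖P‖₊ * K)) ?_
    ((lipschitzWith_smul α).comp (P.lipschitz.comp hG)) ((P.contDiff.comp hG_diff).const_smul α)
  rw [← NNReal.coe_lt_coe]
  push_cast
  calc ‖α‖ * (‖P‖ * K) ≤ |α| * (1 * K) := by rw [Real.norm_eq_abs]; gcongr
    _ < 1 := by rwa [one_mul]

end Diffeomorphism

theorem ContDiff.gradient {F : Type*} [NormedAddCommGroup F] [InnerProductSpace ℝ F]
    [CompleteSpace F] {f : F → ℝ} {m n : WithTop ℕ∞} (hf : ContDiff ℝ n f) (hmn : m + 1 ≤ n) :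
    ContDiff ℝ m (gradient f) :=
  (InnerProductSpace.toDual ℝ F).symm.toContinuousLinearEquiv.contDiff.comp
    (hf.fderiv_right hmn)

theorem norm_toEuclideanCLM_blockProj_le {n p : ℕ} (blk : Fin n → Fin p) (s : Fin p) :
    ‖Matrix.toEuclideanCLM (𝕜 := ℝ) (blockProj blk s)‖ ≤ 1 := by
  rw [Matrix.l2_opNorm_toEuclideanCLM, blockProj, Matrix.l2_opNorm_diagonal]
  refine (pi_norm_le_iff_of_nonneg zero_le_one).mpr fun i => ?_
  split_ifs <;> simp

theorem blockGradStep_eq_sub_smul_blockProj {n p : ℕ} (f : EuclideanSpace ℝ (Fin n) → ℝ) (α : ℝ)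
    (blk : Fin n → Fin p) (s : Fin p) :
    blockGradStep f α blk s =
      fun x => x - α • Matrix.toEuclideanCLM (𝕜 := ℝ) (blockProj blk s) (gradient f x) := by
  ext x i
  simp only [blockGradStep, blockProj, PiLp.sub_apply, PiLp.smul_apply,
    Matrix.ofLp_toEuclideanCLM, Matrix.mulVec_diagonal, smul_eq_mul]
  by_cases h : blk i = s <;> simp [h]

theorem blockGradStep_isDiffeomorphism {n p : ℕ} {f : EuclideanSpace ℝ (Fin n) → ℝ}
    (hf : ContDiff ℝ 2 f) {K : ℝ≥0} (hlip : LipschitzWith K (gradient f)) {α : ℝ}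
    (hαK : |α| * K < 1) (blk : Fin n → Fin p) (s : Fin p) :
    IsDiffeomorphism (blockGradStep f α blk s) := by
  rw [blockGradStep_eq_sub_smul_blockProj]
  exact isDiffeomorphism_id_sub_smul (norm_toEuclideanCLM_blockProj_le blk s) hlip
    (hf.gradient one_add_one_eq_two.le) hαK

theorem bcgdMap_isDiffeomorphism_general
    {n p : ℕ} (blk : Fin n → Fin p)
    (f : EuclideanSpace ℝ (Fin n) → ℝ) (hf : ContDiff ℝ 2 f)
    (L : ℝ) (hlip : LipschitzWith (Real.toNNReal L) (gradient f))
    (α : ℝ) (hα : 0 < α) (hα' : α < 1 / L) :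
    IsDiffeomorphism (bcgdMap f α blk) := by
  have hL : 0 < L := one_div_pos.mp (hα.trans hα')
  have hαL : |α| * L.toNNReal < 1 := by
    rw [abs_of_pos hα, Real.coe_toNNReal _ hL.le]
    exact (lt_div_iff₀ hL).mp hα'
  exact IsDiffeomorphism.foldl (blockGradStep_isDiffeomorphism hf hlip hαL blk) _

/-- the composite BCGD map `g_{αf} = g^p ∘ ⋯ ∘ g^1` is a diffeomorphism of ℝⁿ. -/
theorem bcgdMap_isDiffeomorphism
    {n p : ℕ} (hp : 0 < p) (blk : Fin n → Fin p)
    (hmono : Monotone blk) (hsurj : Function.Surjective blk)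
    (f : EuclideanSpace ℝ (Fin n) → ℝ) (hf : ContDiff ℝ 2 f)
    (L : ℝ) (hL : 0 < L) (hlip : LipschitzWith (Real.toNNReal L) (gradient f))
    (α : ℝ) (hα : 0 < α) (hα' : α < 1 / L) :
    IsDiffeomorphism (bcgdMap f α blk) :=
  bcgdMap_isDiffeomorphism_general blk f hf L hlip α hα hα'

end
end

section
/- Let B ∈ ℝ^{n×n} be symmetric and invertible, with spectral radius ρ(B), and let B̌ be its strictly block lower triangular part. Then for every β ∈ (0, 1/ρ(B)) and every t ∈ [0, 1], every (complex) eigenvalue λ of the matrix B^{-1}(I_n + tβ B̌) satisfies Re(λ) ≠ 0. -/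
open Matrix MeasureTheory Filter Topology

noncomputable section

/-!
If `B⁻¹(I + cB̌)v = zv` with `v ≠ 0`, then `(I + cB̌)v = zBv`, and pairing with `v̄` gives
`v̄ᵀ(I + cB̌)v = z · v̄ᵀBv` with `v̄ᵀBv` real. So if `Re z = 0`, then writing `v = x + iy`,
`xᵀ(I + cB̌)x + yᵀ(I + cB̌)y = 0`. On the other hand `2xᵀB̌x = xᵀBx - xᵀDx` with `D` the block
diagonal part of `B`, and `D = ∑ₛ PₛBPₛ` is a pinching of `B` by the block projections, so
`-ρ(B) ≤ D ≤ ρ(B)` in the Loewner order just as `-ρ(B) ≤ B ≤ ρ(B)`. Hence `|xᵀB̌x| ≤ ρ(B)‖x‖²`,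
and `I + cB̌` is positive definite on real vectors because `|c|ρ(B) < 1`.
-/

open scoped MatrixOrder

section SpectralRadius

variable {ι : Type*} [Fintype ι] [DecidableEq ι]

theorem isEigenvalue_iff_mem_spectrum {M : Matrix ι ι ℝ} {z : ℂ} :
    IsEigenvalue M z ↔ z ∈ spectrum ℂ (M.map Complex.ofReal) := by
  rw [← Matrix.spectrum_toLin', ← Module.End.hasEigenvalue_iff_mem_spectrum]
  constructor
  · rintro ⟨v, hv, hMv⟩
    exact Module.End.hasEigenvalue_of_hasEigenvector
      ⟨Module.End.mem_eigenspace_iff.mpr (by simpa using hMv), hv⟩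
  · intro h
    obtain ⟨v, hv, hv0⟩ := h.exists_hasEigenvector
    exact ⟨v, hv0, by simpa using Module.End.mem_eigenspace_iff.mp hv⟩

theorem IsEigenvalue.norm_le_specRad {M : Matrix ι ι ℝ} {z : ℂ} (hz : IsEigenvalue M z) :
    ‖z‖ ≤ specRad M := by
  have hfin : {r : ℝ | ∃ z : ℂ, IsEigenvalue M z ∧ r = ‖z‖}.Finite := by
    convert (M.map Complex.ofReal).finite_spectrum.image (‖·‖) using 1
    ext r
    simp [isEigenvalue_iff_mem_spectrum, eq_comm]
  exact le_csSup hfin.bddAbove ⟨z, hz, rfl⟩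

theorem abs_le_specRad_of_mem_spectrum {M : Matrix ι ι ℝ} {μ : ℝ} (hμ : μ ∈ spectrum ℝ M) :
    |μ| ≤ specRad M := by
  rw [Matrix.mem_spectrum_iff_isRoot_charpoly] at hμ
  have hμℂ : (μ : ℂ) ∈ spectrum ℂ (M.map Complex.ofReal) := by
    rw [Matrix.mem_spectrum_iff_isRoot_charpoly,
      show M.map Complex.ofReal = M.map Complex.ofRealHom from rfl, Matrix.charpoly_map]
    exact hμ.map
  simpa using (isEigenvalue_iff_mem_spectrum.mpr hμℂ).norm_le_specRad

theorem Matrix.IsSymm.le_algebraMap_specRad {B : Matrix ι ι ℝ} (hB : B.IsSymm) :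
    B ≤ algebraMap ℝ _ (specRad B) :=
  le_algebraMap_of_spectrum_le
    (fun _ hμ => (le_abs_self _).trans (abs_le_specRad_of_mem_spectrum hμ))
    (Matrix.isHermitian_iff_isSymm.mpr hB).isSelfAdjoint

theorem Matrix.IsSymm.algebraMap_neg_specRad_le {B : Matrix ι ι ℝ} (hB : B.IsSymm) :
    algebraMap ℝ _ (-specRad B) ≤ B :=
  algebraMap_le_of_le_spectrum
    (fun _ hμ => neg_le.mp ((neg_le_abs _).trans (abs_le_specRad_of_mem_spectrum hμ)))
    (Matrix.isHermitian_iff_isSymm.mpr hB).isSelfAdjoint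

end SpectralRadius

section QuadraticForms

variable {ι : Type*} [Fintype ι]

theorem star_dotProduct_map_ofReal_mulVec (M : Matrix ι ι ℝ) (v : ι → ℂ) :
    star v ⬝ᵥ M.map Complex.ofReal *ᵥ v =
      ⟨(fun i => (v i).re) ⬝ᵥ M *ᵥ (fun i => (v i).re) +
        (fun i => (v i).im) ⬝ᵥ M *ᵥ (fun i => (v i).im),
       (fun i => (v i).re) ⬝ᵥ M *ᵥ (fun i => (v i).im) -
        (fun i => (v i).im) ⬝ᵥ M *ᵥ (fun i => (v i).re)⟩ := by
  apply Complex.ext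
  · simp [dotProduct, Matrix.mulVec, Complex.mul_re, Finset.mul_sum, ← Finset.sum_add_distrib]
  · simp [dotProduct, Matrix.mulVec, Complex.mul_im, Finset.mul_sum, ← Finset.sum_sub_distrib,
      ← sub_eq_add_neg]

theorem dotProduct_mulVec_mono {A A' : Matrix ι ι ℝ} (h : A ≤ A') (x : ι → ℝ) :
    x ⬝ᵥ A *ᵥ x ≤ x ⬝ᵥ A' *ᵥ x := by
  have := (Matrix.le_iff.mp h).dotProduct_mulVec_nonneg x
  rwa [star_trivial, Matrix.sub_mulVec, dotProduct_sub, sub_nonneg] at this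

variable [DecidableEq ι]

theorem dotProduct_algebraMap_mulVec (r : ℝ) (x : ι → ℝ) :
    x ⬝ᵥ algebraMap ℝ (Matrix ι ι ℝ) r *ᵥ x = r * (x ⬝ᵥ x) := by
  simp [Algebra.algebraMap_eq_smul_one, Matrix.smul_mulVec]

theorem dotProduct_one_add_smul_mulVec_pos {M : Matrix ι ι ℝ} {r c : ℝ}
    (hM : ∀ x, |x ⬝ᵥ M *ᵥ x| ≤ r * (x ⬝ᵥ x)) (hcr : |c| * r < 1) {x : ι → ℝ} (hx : x ≠ 0) :
    0 < x ⬝ᵥ (1 + c • M) *ᵥ x := by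
  have hxx : 0 < x ⬝ᵥ x := lt_of_le_of_ne (Finset.sum_nonneg fun i _ => mul_self_nonneg (x i))
    (Ne.symm (mt dotProduct_self_eq_zero.mp hx))
  have hcM : |c * (x ⬝ᵥ M *ᵥ x)| ≤ |c| * r * (x ⬝ᵥ x) := by
    rw [abs_mul, mul_assoc]
    exact mul_le_mul_of_nonneg_left (hM x) (abs_nonneg c)
  rw [Matrix.add_mulVec, Matrix.one_mulVec, Matrix.smul_mulVec, dotProduct_add, dotProduct_smul,
    smul_eq_mul]
  nlinarith [neg_abs_le (c * (x ⬝ᵥ M *ᵥ x))]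

end QuadraticForms

section BlockParts

variable {n p : ℕ} (blk : Fin n → Fin p)

def diagBlockPart (A : Matrix (Fin n) (Fin n) ℝ) : Matrix (Fin n) (Fin n) ℝ :=
  Matrix.of fun i j => if blk i = blk j then A i j else 0

theorem lowerBlockPart_add_diagBlockPart_add_upperBlockPart (A : Matrix (Fin n) (Fin n) ℝ) :
    lowerBlockPart blk A + diagBlockPart blk A + upperBlockPart blk A = A := by
  ext i j
  simp only [lowerBlockPart, diagBlockPart, upperBlockPart, Matrix.add_apply, Matrix.of_apply]
  rcases lt_trichotomy (blk i) (blk j) with h | h | h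
  · simp [h, h.ne, h.not_gt]
  · simp [h]
  · simp [h, h.ne', h.not_gt]

theorem transpose_lowerBlockPart {A : Matrix (Fin n) (Fin n) ℝ} (hA : A.IsSymm) :
    (lowerBlockPart blk A)ᵀ = upperBlockPart blk A := by
  ext i j
  simp [lowerBlockPart, upperBlockPart, hA.apply]

theorem isSelfAdjoint_blockProj (s : Fin p) : IsSelfAdjoint (blockProj blk s) := by
  simp [IsSelfAdjoint, blockProj, Matrix.star_eq_conjTranspose]

theorem diagBlockPart_eq_sum_blockProj (A : Matrix (Fin n) (Fin n) ℝ) :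
    diagBlockPart blk A = ∑ s, blockProj blk s * A * blockProj blk s := by
  ext i j
  simp [diagBlockPart, blockProj, Matrix.sum_apply, Matrix.diagonal_mul, Matrix.mul_diagonal]

theorem diagBlockPart_mono {A A' : Matrix (Fin n) (Fin n) ℝ} (h : A ≤ A') :
    diagBlockPart blk A ≤ diagBlockPart blk A' := by
  simp only [diagBlockPart_eq_sum_blockProj]
  exact Finset.sum_le_sum fun s _ => (isSelfAdjoint_blockProj blk s).conjugate_le_conjugate h

theorem diagBlockPart_algebraMap (r : ℝ) :
    diagBlockPart blk (algebraMap ℝ (Matrix (Fin n) (Fin n) ℝ) r) = algebraMap ℝ _ r := by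
  ext i j
  by_cases h : i = j <;> simp [diagBlockPart, Matrix.algebraMap_matrix_apply, h]

theorem Matrix.IsSymm.abs_dotProduct_lowerBlockPart_mulVec_le {B : Matrix (Fin n) (Fin n) ℝ}
    (hB : B.IsSymm) (x : Fin n → ℝ) :
    |x ⬝ᵥ lowerBlockPart blk B *ᵥ x| ≤ specRad B * (x ⬝ᵥ x) := by
  set ρ := specRad B
  have hsplit : B - diagBlockPart blk B = lowerBlockPart blk B + (lowerBlockPart blk B)ᵀ := by
    nth_rw 1 [← lowerBlockPart_add_diagBlockPart_add_upperBlockPart blk B]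
    rw [transpose_lowerBlockPart blk hB]
    abel
  have hquad : x ⬝ᵥ (B - diagBlockPart blk B) *ᵥ x = 2 * (x ⬝ᵥ lowerBlockPart blk B *ᵥ x) := by
    rw [hsplit, Matrix.add_mulVec, dotProduct_add, Matrix.mulVec_transpose,
      dotProduct_comm x (x ᵥ* _), ← Matrix.dotProduct_mulVec, two_mul]
  have hup : B - diagBlockPart blk B ≤ algebraMap ℝ _ (ρ - -ρ) := by
    rw [map_sub, ← diagBlockPart_algebraMap blk (-ρ)]
    exact sub_le_sub hB.le_algebraMap_specRad (diagBlockPart_mono blk hB.algebraMap_neg_specRad_le)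
  have hlo : algebraMap ℝ _ (-ρ - ρ) ≤ B - diagBlockPart blk B := by
    rw [map_sub, ← diagBlockPart_algebraMap blk ρ]
    exact sub_le_sub hB.algebraMap_neg_specRad_le (diagBlockPart_mono blk hB.le_algebraMap_specRad)
  have h1 := dotProduct_mulVec_mono hup x
  have h2 := dotProduct_mulVec_mono hlo x
  rw [hquad, dotProduct_algebraMap_mulVec] at h1 h2
  rw [abs_le]
  constructor <;> linarith

end BlockParts

section GeneralizedEigenvalue

variable {ι : Type*} [Fintype ι]

theorem re_ne_zero_of_map_mulVec_eq_smul_map_mulVec {A M : Matrix ι ι ℝ} (hA : A.IsSymm)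
    (hM : ∀ x ≠ 0, 0 < x ⬝ᵥ M *ᵥ x) {v : ι → ℂ} (hv : v ≠ 0) {z : ℂ}
    (h : M.map Complex.ofReal *ᵥ v = z • A.map Complex.ofReal *ᵥ v) : z.re ≠ 0 := by
  intro hz
  set x : ι → ℝ := fun i => (v i).re
  set y : ι → ℝ := fun i => (v i).im
  have hM0 : ∀ w, 0 ≤ w ⬝ᵥ M *ᵥ w := fun w => by
    rcases eq_or_ne w 0 with rfl | hw
    · simp
    · exact (hM w hw).le
  have hA_im : (star v ⬝ᵥ A.map Complex.ofReal *ᵥ v).im = 0 := by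
    simp only [star_dotProduct_map_ofReal_mulVec]
    rw [sub_eq_zero, Matrix.dotProduct_mulVec, ← Matrix.mulVec_transpose, hA.eq, dotProduct_comm]
  have hM_re : x ⬝ᵥ M *ᵥ x + y ⬝ᵥ M *ᵥ y = 0 := by
    have := congrArg (fun w => (star v ⬝ᵥ w).re) h
    simp only [dotProduct_smul, smul_eq_mul, Complex.mul_re, hz, hA_im, zero_mul,
      mul_zero, sub_zero] at this
    rwa [star_dotProduct_map_ofReal_mulVec] at this
  have hxy : x ≠ 0 ∨ y ≠ 0 := by
    by_contra! hxy
    exact hv (funext fun i => Complex.ext (congrFun hxy.1 i) (congrFun hxy.2 i))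
  rcases hxy with hx | hy
  · linarith [hM x hx, hM0 y]
  · linarith [hM0 x, hM y hy]

theorem IsEigenvalue.exists_map_mulVec_eq_smul_map_mulVec [DecidableEq ι] {A M : Matrix ι ι ℝ}
    (hA : IsUnit A) {z : ℂ} (hz : IsEigenvalue (A⁻¹ * M) z) :
    ∃ v ≠ 0, M.map Complex.ofReal *ᵥ v = z • A.map Complex.ofReal *ᵥ v := by
  obtain ⟨v, hv, hev⟩ := hz
  have hAM : A.map Complex.ofReal * (A⁻¹ * M).map Complex.ofReal = M.map Complex.ofReal := by
    rw [show (Complex.ofReal : ℝ → ℂ) = Complex.ofRealHom from rfl, ← Matrix.map_mul,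
      ← Matrix.mul_assoc, Matrix.mul_nonsing_inv _ ((Matrix.isUnit_iff_isUnit_det A).mp hA),
      Matrix.one_mul]
  refine ⟨v, hv, ?_⟩
  rw [← hAM, ← Matrix.mulVec_mulVec, hev, Matrix.mulVec_smul]

end GeneralizedEigenvalue

theorem eigenvalue_re_ne_zero_of_inv_mul_one_add_lower_general
    {n p : ℕ} (blk : Fin n → Fin p)
    (B : Matrix (Fin n) (Fin n) ℝ) (hB : B.IsSymm) (hBunit : IsUnit B)
    (β t : ℝ) (hβ0 : 0 < β) (hβ1 : β < 1 / specRad B) (ht0 : 0 ≤ t) (ht1 : t ≤ 1)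
    (z : ℂ)
    (hz : IsEigenvalue (B⁻¹ * ((1 : Matrix (Fin n) (Fin n) ℝ) +
      (t * β) • lowerBlockPart blk B)) z) :
    z.re ≠ 0 := by
  obtain ⟨v, hv, hMv⟩ := hz.exists_map_mulVec_eq_smul_map_mulVec hBunit
  have hρ : 0 < specRad B := by
    by_contra! h
    linarith [div_nonpos_of_nonneg_of_nonpos zero_le_one h]
  have hcρ : |t * β| * specRad B < 1 := by
    rw [abs_of_nonneg (mul_nonneg ht0 hβ0.le)]
    calc t * β * specRad B ≤ β * specRad B := by gcongr; exact mul_le_of_le_one_left hβ0.le ht1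
      _ < 1 := by rwa [lt_div_iff₀ hρ] at hβ1
  exact re_ne_zero_of_map_mulVec_eq_smul_map_mulVec hB
    (fun x hx => dotProduct_one_add_smul_mulVec_pos (hB.abs_dotProduct_lowerBlockPart_mulVec_le blk)
      hcρ hx) hv hMv

/-- for invertible symmetric `B`, `β ∈ (0, 1/ρ(B))` and `t ∈ [0,1]`, every
complex eigenvalue of `B⁻¹(I + tβ B̌)` has nonzero real part. -/
theorem eigenvalue_re_ne_zero_of_inv_mul_one_add_lower
    {n p : ℕ} (hp : 0 < p) (blk : Fin n → Fin p)
    (hmono : Monotone blk) (hsurj : Function.Surjective blk)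
    (B : Matrix (Fin n) (Fin n) ℝ) (hB : B.IsSymm) (hBunit : IsUnit B)
    (β t : ℝ) (hβ0 : 0 < β) (hβ1 : β < 1 / specRad B) (ht0 : 0 ≤ t) (ht1 : t ≤ 1)
    (z : ℂ)
    (hz : IsEigenvalue (B⁻¹ * ((1 : Matrix (Fin n) (Fin n) ℝ) +
      (t * β) • lowerBlockPart blk B)) z) :
    z.re ≠ 0 :=
  eigenvalue_re_ne_zero_of_inv_mul_one_add_lower_general blk B hB hBunit β t hβ0 hβ1 ht0 ht1 z hz
end
end
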